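/- arXiv:1503.01207 — 3 statements merged into one kernel-verified Lean document; each statement's English description precedes it below -/
import Mathlib

section
/- Let n ≥ 2 and let T = {S ⊆ [n] : |S| ∈ {0,2,4,…,⌈n/2⌉}} if ⌈n/2⌉ is even, and T = {S ⊆ [n] : |S| ∈ {1,3,5,…,⌈n/2⌉}} if ⌈n/2⌉ is odd. Let CUT_n = conv{(x_i x_j)_{1≤i<j≤n} ∈ ℝ^{n(n−1)/2} : x ∈ {−1,1}^n} be the cut polytope. Then CUT_n equals the set of all ℓ = (ℓ_{ij})_{1≤i<j≤n} ∈ ℝ^{n(n−1)/2} for which there exists a real-valued family y = (y_A) indexed by A ∈ TΔT := {S Δ S' : S, S' ∈ T} such that y_∅ = 1, y_{{i,j}} = ℓ_{ij} for all 1 ≤ i < j ≤ n, and the real symmetric matrix [y_{S Δ S'}]_{S,S'∈T} is positive semidefinite. In particular CUT_n has a real positive semidefinite lift of size |T|. -/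
/-!
A vertex `x ∈ {±1}ⁿ` lifts by `y_A = ∏_{i ∈ A} x_i`, whose moment matrix `[y_{S ∆ S'}]` is
`v vᵀ` with `v_S = y_S`; the lift is convex, so it contains `CUT_n`.

Conversely let `y` lift `ℓ` and `0 ≤ t < 1`, and put `f = t [y_{P ∆ Q}] + (1 - t) I` on the even
subsets of `[n]`. There are two centers `g₁, g₂` with `|gᵢ| ≡ ⌈n/2⌉ (mod 2)` and
`|g₁ ∆ P| + |g₂ ∆ P| ≤ n + 1` for all `P`, so the balls `{P : |gᵢ ∆ P| ≤ ⌈n/2⌉}` cover every even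
set and every pair of even sets at distance `2`. On a ball, `P ↦ gᵢ ∆ P` lands in `T`, so there
`f` is `t` times a submatrix of the given moment matrix plus `(1 - t) I`, hence positive definite,
and the Schur-complement formula completes `f` from the two balls to a positive semidefinite `N`.
Folding every subset onto an even one (`U` or `U ∆ {x₀}`) turns `N` into a positive semidefinite
`K` on all subsets with `K U U = 1` and `K U (U ∆ {i, j}) = t ℓ_{ij}`. The Fourier coefficients
`χ_xᵀ K χ_x ≥ 0`, `χ_x(U) = ∏_{i ∈ U} x_i`, are then the weights of `t ℓ` as a convex combination
of cut vectors, and `t → 1` gives `ℓ ∈ CUT_n`.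
-/

open scoped Classical symmDiff

open Finset Matrix

section SymmDiff

variable {α : Type*} [DecidableEq α]

lemma Finset.prod_symmDiff_of_mul_self {M : Type*} [CommMonoid M] {x : α → M}
    (hx : ∀ i, x i * x i = 1) (A B : Finset α) :
    ∏ i ∈ A ∆ B, x i = (∏ i ∈ A, x i) * ∏ i ∈ B, x i := by
  have hAB : ∏ i ∈ A ∩ B, (x i * x i) = 1 := prod_eq_one fun i _ => hx i
  rw [← prod_inter_mul_prod_sdiff A B, ← prod_inter_mul_prod_sdiff B A, inter_comm B A,
    symmDiff_def, sup_eq_union, prod_union disjoint_sdiff_sdiff, prod_mul_distrib] at *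
  calc (∏ i ∈ A \ B, x i) * ∏ i ∈ B \ A, x i
      = (∏ i ∈ A ∩ B, x i) * (∏ i ∈ A ∩ B, x i) * ((∏ i ∈ A \ B, x i) * ∏ i ∈ B \ A, x i) := by
        rw [hAB, one_mul]
    _ = _ := by ac_rfl

lemma Finset.card_symmDiff_add_two_mul_card_inter (A B : Finset α) :
    #(A ∆ B) + 2 * #(A ∩ B) = #A + #B := by
  have hA := card_sdiff_add_card_inter A B
  have hB := card_sdiff_add_card_inter B A
  rw [inter_comm B A] at hB
  rw [symmDiff_def, sup_eq_union, card_union_of_disjoint disjoint_sdiff_sdiff]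
  omega

lemma Finset.card_symmDiff_mod_two (A B : Finset α) : #(A ∆ B) % 2 = (#A + #B) % 2 := by
  have := card_symmDiff_add_two_mul_card_inter A B
  omega

lemma Finset.card_symmDiff_le (A B : Finset α) : #(A ∆ B) ≤ #A + #B := by
  have := card_symmDiff_add_two_mul_card_inter A B
  omega

lemma Finset.card_add_card_symmDiff_add_card_le [Fintype α] (W c : Finset α) :
    #W + #(W ∆ c) + #c ≤ 2 * Fintype.card α := by
  have := card_symmDiff_add_two_mul_card_inter W c
  have := card_union_add_card_inter W c
  have := card_le_univ (W ∪ c)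
  omega

def toEven (x₀ : α) (U : Finset α) : {P : Finset α // #P % 2 = 0} :=
  if h : #U % 2 = 0 then ⟨U, h⟩
  else ⟨U ∆ {x₀}, by rw [card_symmDiff_mod_two, card_singleton]; omega⟩

lemma coe_toEven_symmDiff (x₀ : α) (U : Finset α) {A : Finset α} (hA : #A % 2 = 0) :
    (toEven x₀ (U ∆ A) : Finset α) = (toEven x₀ U : Finset α) ∆ A := by
  have := card_symmDiff_mod_two U A
  by_cases hU : #U % 2 = 0
  · simp [toEven, hU, show #(U ∆ A) % 2 = 0 by omega]
  · simp [toEven, hU, show #(U ∆ A) % 2 ≠ 0 by omega, symmDiff_right_comm]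

end SymmDiff

section Completion

lemma Matrix.dotProduct_transpose_mul_mul_mulVec {ι κ R : Type*} [Fintype ι] [Fintype κ]
    [CommSemiring R] (A B : Matrix ι κ R) (M : Matrix ι ι R) (u v : κ → R) :
    u ⬝ᵥ (Aᵀ * M * B) *ᵥ v = (A *ᵥ u) ⬝ᵥ M *ᵥ (B *ᵥ v) := by
  rw [← mulVec_mulVec, ← mulVec_mulVec, dotProduct_mulVec, vecMul_transpose]

variable {ι : Type*} [DecidableEq ι]

def zeroExtend (s : Finset ι) : Matrix ι s ℝ := (1 : Matrix ι ι ℝ).submatrix id (↑)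

lemma zeroExtend_mulVec_apply_of_notMem {s : Finset ι} (v : s → ℝ) {i : ι} (hi : i ∉ s) :
    (zeroExtend s *ᵥ v) i = 0 :=
  sum_eq_zero fun k _ => by simp [zeroExtend, one_apply, show i ≠ k from fun h => hi (h ▸ k.2)]

def coordProj (S : Finset ι) : Matrix ι ι ℝ := diagonal fun i => if i ∈ S then 1 else 0

lemma transpose_coordProj (S : Finset ι) : (coordProj S)ᵀ = coordProj S := diagonal_transpose _

noncomputable def blockInverse (f : Matrix ι ι ℝ) (O : Finset ι) : Matrix ι ι ℝ :=
  (zeroExtend O * (f.submatrix ((↑) : O → ι) (↑))⁻¹ : Matrix ι O ℝ) * (zeroExtend O)ᵀ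

lemma transpose_blockInverse {f : Matrix ι ι ℝ} (hf : fᵀ = f) (O : Finset ι) :
    (blockInverse f O)ᵀ = blockInverse f O := by
  rw [blockInverse, transpose_mul, transpose_mul, transpose_transpose, transpose_nonsing_inv,
    transpose_submatrix, hf, Matrix.mul_assoc]

variable [Fintype ι]

lemma coordProj_mulVec_apply (S : Finset ι) (φ : ι → ℝ) (i : ι) :
    (coordProj S *ᵥ φ) i = if i ∈ S then φ i else 0 := by
  simp [coordProj, mulVec_diagonal]

lemma transpose_zeroExtend_mul_mul_zeroExtend (s : Finset ι) (M : Matrix ι ι ℝ) :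
    (zeroExtend s)ᵀ * M * zeroExtend s = M.submatrix (↑) (↑) := by
  ext k l
  simp [zeroExtend, mul_apply, one_apply]

lemma zeroExtend_mulVec_transpose_mulVec {s : Finset ι} {u : ι → ℝ} (hu : ∀ i ∉ s, u i = 0) :
    zeroExtend s *ᵥ ((zeroExtend s)ᵀ *ᵥ u) = u := by
  ext i
  by_cases hi : i ∈ s
  · simp [zeroExtend, mulVec, dotProduct, one_apply, hi,
      sum_attach s fun j => if i = j then u j else 0]
  · rw [zeroExtend_mulVec_apply_of_notMem _ hi, hu i hi]

lemma dotProduct_mulVec_nonneg_of_support {M : Matrix ι ι ℝ} {s : Finset ι}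
    (hM : (M.submatrix ((↑) : s → ι) (↑)).PosSemidef) {u : ι → ℝ} (hu : ∀ i ∉ s, u i = 0) :
    0 ≤ u ⬝ᵥ M *ᵥ u := by
  rw [← zeroExtend_mulVec_transpose_mulVec hu, ← dotProduct_transpose_mul_mul_mulVec,
    transpose_zeroExtend_mul_mul_zeroExtend]
  simpa using hM.dotProduct_mulVec_nonneg ((zeroExtend s)ᵀ *ᵥ u)

lemma blockInverse_mulVec_apply_of_notMem (f : Matrix ι ι ℝ) {O : Finset ι} (v : ι → ℝ)
    {i : ι} (hi : i ∉ O) : (blockInverse f O *ᵥ v) i = 0 := by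
  rw [blockInverse, ← mulVec_mulVec, ← mulVec_mulVec, zeroExtend_mulVec_apply_of_notMem _ hi]

lemma blockInverse_mulVec_mulVec {f : Matrix ι ι ℝ} {O : Finset ι}
    (hO : (f.submatrix ((↑) : O → ι) (↑)).PosDef) {u : ι → ℝ} (hu : ∀ i ∉ O, u i = 0) :
    blockInverse f O *ᵥ (f *ᵥ u) = u := by
  have hinv : (f.submatrix ((↑) : O → ι) (↑))⁻¹ * ((zeroExtend O)ᵀ * (f * zeroExtend O)) = 1 := by
    rw [← Matrix.mul_assoc (zeroExtend O)ᵀ, transpose_zeroExtend_mul_mul_zeroExtend,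
      nonsing_inv_mul _ ((isUnit_iff_isUnit_det _).mp hO.isUnit)]
  conv_lhs => rw [← zeroExtend_mulVec_transpose_mulVec hu]
  rw [blockInverse, ← mulVec_mulVec, ← mulVec_mulVec, mulVec_mulVec (M := f),
    mulVec_mulVec (N := f * _), mulVec_mulVec (N := _ * (f * _)), hinv, one_mulVec,
    zeroExtend_mulVec_transpose_mulVec hu]

lemma dotProduct_mulVec_blockInverse_mulVec {f : Matrix ι ι ℝ} (hf : fᵀ = f) {O : Finset ι}
    (hO : (f.submatrix ((↑) : O → ι) (↑)).PosDef) {u : ι → ℝ} (hu : ∀ i ∉ O, u i = 0)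
    (v : ι → ℝ) : u ⬝ᵥ f *ᵥ (blockInverse f O *ᵥ (f *ᵥ v)) = u ⬝ᵥ f *ᵥ v := by
  rw [mulVec_mulVec (M := f), ← dotProduct_transpose_mulVec (f * _), transpose_mul,
    transpose_blockInverse hf, hf, ← mulVec_mulVec, blockInverse_mulVec_mulVec hO hu,
    dotProduct_comm]

noncomputable def twoBlockCompletion (f : Matrix ι ι ℝ) (s t : Finset ι) : Matrix ι ι ℝ :=
  let X := coordProj (s \ t) * (f * blockInverse f (s ∩ t) * f - f) * coordProj sᶜ
  f + X + Xᵀ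

lemma twoBlockCompletion_apply (f : Matrix ι ι ℝ) {s t : Finset ι} {i j : ι}
    (hij : (i ∈ s ∧ j ∈ s) ∨ (i ∈ t ∧ j ∈ t)) : twoBlockCompletion f s t i j = f i j := by
  have hX (k l : ι) (hkl : (k ∈ s ∧ l ∈ s) ∨ (k ∈ t ∧ l ∈ t)) :
      (coordProj (s \ t) * (f * blockInverse f (s ∩ t) * f - f) * coordProj sᶜ) k l = 0 := by
    simp only [coordProj, diagonal_mul, mul_diagonal]
    rcases hkl with ⟨-, hl⟩ | ⟨hk, -⟩ <;> simp [*]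
  simp only [twoBlockCompletion, Matrix.add_apply, transpose_apply, hX i j hij,
    hX j i (by tauto), add_zero]

lemma dotProduct_twoBlockCompletion_mulVec (f : Matrix ι ι ℝ) (s t : Finset ι) (φ : ι → ℝ) :
    φ ⬝ᵥ twoBlockCompletion f s t *ᵥ φ = φ ⬝ᵥ f *ᵥ φ +
      2 * ((coordProj (s \ t) *ᵥ φ) ⬝ᵥ f *ᵥ (blockInverse f (s ∩ t) *ᵥ (f *ᵥ (coordProj sᶜ *ᵥ φ)))
        - (coordProj (s \ t) *ᵥ φ) ⬝ᵥ f *ᵥ (coordProj sᶜ *ᵥ φ)) := by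
  simp only [twoBlockCompletion, add_mulVec, dotProduct_add, dotProduct_transpose_mulVec]
  rw [← transpose_coordProj (s \ t), dotProduct_transpose_mul_mul_mulVec, sub_mulVec,
    dotProduct_sub, ← mulVec_mulVec, ← mulVec_mulVec, transpose_coordProj]
  ring

theorem posSemidef_twoBlockCompletion {f : Matrix ι ι ℝ} (hf : fᵀ = f) {s t : Finset ι}
    (hst : s ∪ t = univ)
    (hs : (f.submatrix ((↑) : s → ι) (↑)).PosSemidef)
    (ht : (f.submatrix ((↑) : t → ι) (↑)).PosSemidef)
    (hO : (f.submatrix ((↑) : ↥(s ∩ t) → ι) (↑)).PosDef) :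
    (twoBlockCompletion f s t).PosSemidef := by
  refine posSemidef_iff_dotProduct_mulVec.mpr ⟨?_, fun φ => ?_⟩
  · simp [IsHermitian, twoBlockCompletion, conjTranspose_eq_transpose_of_trivial, hf]
    abel
  rw [star_trivial, dotProduct_twoBlockCompletion_mulVec]
  set a := coordProj (s \ t) *ᵥ φ
  set b := coordProj (s ∩ t) *ᵥ φ
  set c := coordProj sᶜ *ᵥ φ
  set w := blockInverse f (s ∩ t) *ᵥ (f *ᵥ c)
  have hφ : φ = a + b + c := by
    ext i
    simp only [a, b, c, Pi.add_apply, coordProj_mulVec_apply]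
    by_cases hi : i ∈ s <;> by_cases hi' : i ∈ t <;> simp [hi, hi']
  have hB (u v : ι → ℝ) : u ⬝ᵥ f *ᵥ v = v ⬝ᵥ f *ᵥ u := by
    rw [← dotProduct_transpose_mulVec, hf]
  have hb (i : ι) (hi : i ∉ s ∩ t) : b i = 0 := by simp [b, coordProj_mulVec_apply, hi]
  have hw (i : ι) (hi : i ∉ s ∩ t) : w i = 0 := blockInverse_mulVec_apply_of_notMem f _ hi
  -- with the Schur-complement correction `w`, the form at `a + b + c` is `q(a + b + w) + q(c - w)`
  have h₁ : 0 ≤ (a + b + w) ⬝ᵥ f *ᵥ (a + b + w) := by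
    refine dotProduct_mulVec_nonneg_of_support hs fun i hi => ?_
    simp [a, hb i (by simp [hi]), hw i (by simp [hi]), coordProj_mulVec_apply, hi]
  have h₂ : 0 ≤ (c - w) ⬝ᵥ f *ᵥ (c - w) := by
    refine dotProduct_mulVec_nonneg_of_support ht fun i hi => ?_
    have : i ∈ s := by simpa [hi] using Finset.ext_iff.mp hst i
    simp [c, hw i (by simp [hi]), coordProj_mulVec_apply, this]
  rw [hφ]
  simp only [mulVec_add, mulVec_sub, dotProduct_add, add_dotProduct, dotProduct_sub,
    sub_dotProduct] at h₁ h₂ ⊢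
  linarith [hB a b, hB a c, hB b c, hB a w, hB b w, hB c w,
    dotProduct_mulVec_blockInverse_mulVec hf hO hb c,
    dotProduct_mulVec_blockInverse_mulVec hf hO hw c]

end Completion

section Characters

variable {α : Type*} [Fintype α] [DecidableEq α]

noncomputable def signVectors (α : Type*) [Fintype α] [DecidableEq α] : Finset (α → ℝ) :=
  Fintype.piFinset fun _ => {1, -1}

lemma mem_signVectors {x : α → ℝ} : x ∈ signVectors α ↔ ∀ i, x i = 1 ∨ x i = -1 := by
  simp [signVectors]

def chi (x : α → ℝ) (U : Finset α) : ℝ := ∏ i ∈ U, x i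

lemma chi_symmDiff {x : α → ℝ} (hx : x ∈ signVectors α) (A B : Finset α) :
    chi x (A ∆ B) = chi x A * chi x B :=
  prod_symmDiff_of_mul_self (fun i => by rcases mem_signVectors.mp hx i with h | h <;> simp [h])
    A B

lemma sum_chi (A : Finset α) :
    ∑ x ∈ signVectors α, chi x A = if A = ∅ then 2 ^ Fintype.card α else 0 := by
  have h (x : α → ℝ) : chi x A = ∏ i, if i ∈ A then x i else 1 := by
    rw [prod_ite_mem, univ_inter, chi]
  simp only [h, signVectors]
  rw [sum_prod_piFinset {1, -1} fun i v => if i ∈ A then v else 1]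
  split_ifs with hA
  · norm_num [hA]
  · obtain ⟨i, hi⟩ := nonempty_iff_ne_empty.mpr hA
    exact prod_eq_zero (mem_univ i) (by norm_num [hi])

lemma sum_chi_mul_chi (A B : Finset α) :
    ∑ x ∈ signVectors α, chi x A * chi x B = if A = B then 2 ^ Fintype.card α else 0 := by
  rw [sum_congr rfl fun x hx => (chi_symmDiff hx A B).symm, sum_chi]
  simp only [← bot_eq_empty, symmDiff_eq_bot]

lemma sum_dotProduct_chi_mulVec_chi_mul_chi (K : Matrix (Finset α) (Finset α) ℝ)
    (A : Finset α) :
    ∑ x ∈ signVectors α, (chi x ⬝ᵥ K *ᵥ chi x) * chi x A =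
      2 ^ Fintype.card α * ∑ U, K U (U ∆ A) := by
  calc ∑ x ∈ signVectors α, (chi x ⬝ᵥ K *ᵥ chi x) * chi x A
      = ∑ U, ∑ V, K U V * ∑ x ∈ signVectors α, chi x (U ∆ A) * chi x V := by
        simp only [dotProduct, mulVec, sum_mul, mul_sum]
        rw [sum_comm]
        refine sum_congr rfl fun U _ => ?_
        rw [sum_comm]
        refine sum_congr rfl fun V _ => sum_congr rfl fun x hx => ?_
        rw [chi_symmDiff hx]
        ring
    _ = 2 ^ Fintype.card α * ∑ U, K U (U ∆ A) := by
        simp [sum_chi_mul_chi, mul_sum, mul_comm]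

end Characters

section CutPolytope

variable {α : Type*} [LinearOrder α] [DecidableEq α]

def cutVertices (α : Type*) [LinearOrder α] : Set ({p : α × α // p.1 < p.2} → ℝ) :=
  {ℓ | ∃ x : α → ℝ, (∀ i, x i = 1 ∨ x i = -1) ∧ ℓ = fun p => x p.1.1 * x p.1.2}

def momentMatrix (p : Finset α → Prop) (y : Finset α → ℝ) : Matrix {s // p s} {s // p s} ℝ :=
  Matrix.of fun s t => y (s.1 ∆ t.1)

def psdLift (α : Type*) [LinearOrder α] [DecidableEq α] (p : Finset α → Prop) :
    Set ({q : α × α // q.1 < q.2} → ℝ) :=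
  {ℓ | ∃ y : Finset α → ℝ, y ∅ = 1 ∧ (∀ q : {q : α × α // q.1 < q.2}, y {q.1.1, q.1.2} = ℓ q) ∧
    (momentMatrix p y).PosSemidef}

lemma convex_psdLift (p : Finset α → Prop) : Convex ℝ (psdLift α p) := by
  rintro u ⟨y₁, hy₁, hu, hM₁⟩ v ⟨y₂, hy₂, hv, hM₂⟩ a b ha hb hab
  refine ⟨a • y₁ + b • y₂, by simp [hy₁, hy₂, hab], fun q => by simp [hu q, hv q], ?_⟩
  have : momentMatrix p (a • y₁ + b • y₂) = a • momentMatrix p y₁ + b • momentMatrix p y₂ := by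
    ext
    simp [momentMatrix]
  rw [this]
  exact (hM₁.smul ha).add (hM₂.smul hb)

lemma cutVertices_subset_psdLift [Fintype α] (p : Finset α → Prop) :
    cutVertices α ⊆ psdLift α p := by
  rintro - ⟨x, hx, rfl⟩
  have hxx (i : α) : x i * x i = 1 := by rcases hx i with h | h <;> simp [h]
  set v : {s // p s} → ℝ := fun s => ∏ i ∈ s.1, x i
  refine ⟨fun A => ∏ i ∈ A, x i, prod_empty, fun q => prod_pair q.2.ne, ?_⟩
  have : momentMatrix p (fun A => ∏ i ∈ A, x i) = vecMulVec v (star v) := by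
    ext s t
    simp [v, momentMatrix, vecMulVec_apply, prod_symmDiff_of_mul_self hxx]
  rw [this]
  exact posSemidef_vecMulVec_self_star v

lemma finite_cutVertices [Fintype α] : (cutVertices α).Finite :=
  ((signVectors α).finite_toSet.image fun x p => x p.1.1 * x p.1.2).subset
    fun _ ⟨x, hx, hℓ⟩ => ⟨x, mem_signVectors.mpr hx, hℓ.symm⟩

theorem mem_convexHull_cutVertices_of_posSemidef [Fintype α]
    {K : Matrix (Finset α) (Finset α) ℝ} (hK : K.PosSemidef) (hdiag : ∀ U, K U U = 1)
    {ℓ : {q : α × α // q.1 < q.2} → ℝ} (hℓ : ∀ U q, K U (U ∆ {q.1.1, q.1.2}) = ℓ q) :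
    ℓ ∈ convexHull ℝ (cutVertices α) := by
  set w : (α → ℝ) → ℝ := fun x => (chi x ⬝ᵥ K *ᵥ chi x) / 4 ^ Fintype.card α
  have hmoment (A : Finset α) (c : ℝ) (hc : ∀ U, K U (U ∆ A) = c) :
      ∑ x ∈ signVectors α, w x * chi x A = c := by
    have h4 : (4 : ℝ) ^ Fintype.card α = 2 ^ Fintype.card α * 2 ^ Fintype.card α := by
      rw [← mul_pow]; norm_num
    simp only [w, div_mul_eq_mul_div, ← sum_div, sum_dotProduct_chi_mulVec_chi_mul_chi, hc,
      sum_const, card_univ, Fintype.card_finset, nsmul_eq_mul, h4]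
    field_simp
    push_cast
    ring
  have hℓw : ℓ = ∑ x ∈ signVectors α,
      w x • fun q : {q : α × α // q.1 < q.2} => x q.1.1 * x q.1.2 := by
    ext q
    rw [← hmoment _ _ fun U => hℓ U q]
    simp [chi, prod_pair q.2.ne]
  rw [hℓw]
  refine (convex_convexHull ℝ _).sum_mem (fun x _ => ?_) ?_
    fun x hx => subset_convexHull ℝ _ ⟨x, mem_signVectors.mp hx, rfl⟩
  · simpa using div_nonneg (hK.dotProduct_mulVec_nonneg (chi x)) (by positivity)
  · simpa [chi] using hmoment ∅ 1 fun U => by rw [← bot_eq_empty, symmDiff_bot, hdiag]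

end CutPolytope

lemma mem_of_forall_lt_one_smul_mem {E : Type*} [AddCommGroup E] [Module ℝ E]
    [TopologicalSpace E] [ContinuousSMul ℝ E] {C : Set E} (hC : IsClosed C) {ℓ : E}
    (h : ∀ t : ℝ, 0 ≤ t → t < 1 → t • ℓ ∈ C) : ℓ ∈ C := by
  have hcont : Continuous fun t : ℝ => t • ℓ := continuous_id.smul continuous_const
  have hlim : Filter.Tendsto (fun t : ℝ => t • ℓ) (nhdsWithin 1 (Set.Iio 1)) (nhds ℓ) := by
    simpa using (hcont.tendsto 1).mono_left nhdsWithin_le_nhds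
  exact hC.mem_of_tendsto hlim (Filter.eventually_of_mem (Ioo_mem_nhdsLT zero_lt_one)
    fun t ht => h t ht.1.le ht.2)

/-- The index family `T`. -/
def liftIndex (n : ℕ) (s : Finset (Fin n)) : Prop :=
  #s % 2 = (n + 1) / 2 % 2 ∧ #s ≤ (n + 1) / 2

section Centers

variable {n : ℕ} (x₀ : Fin n)

def maxEvenSet : Finset (Fin n) := if n % 2 = 0 then univ else univ.erase x₀

def center₁ : Finset (Fin n) := if (n + 1) / 2 % 2 = 0 then ∅ else {x₀}

def center₂ : Finset (Fin n) := center₁ x₀ ∆ maxEvenSet x₀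

lemma card_maxEvenSet : #(maxEvenSet x₀) % 2 = 0 ∧ n ≤ #(maxEvenSet x₀) + 1 := by
  unfold maxEvenSet
  split_ifs <;> simp [card_erase_of_mem] <;> omega

lemma card_center₁_mod_two : #(center₁ x₀) % 2 = (n + 1) / 2 % 2 := by
  unfold center₁
  split_ifs <;> simp <;> omega

lemma card_center₂_mod_two : #(center₂ x₀) % 2 = (n + 1) / 2 % 2 := by
  have := card_symmDiff_mod_two (center₁ x₀) (maxEvenSet x₀)
  have := card_center₁_mod_two x₀
  have := (card_maxEvenSet x₀).1
  rw [center₂]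
  omega

lemma card_center₁_symmDiff_add_card_center₂_symmDiff_le (P : Finset (Fin n)) :
    #(center₁ x₀ ∆ P) + #(center₂ x₀ ∆ P) ≤ n + 1 := by
  have := card_add_card_symmDiff_add_card_le (center₁ x₀ ∆ P) (maxEvenSet x₀)
  have := (card_maxEvenSet x₀).2
  rw [center₂, symmDiff_right_comm]
  rw [Fintype.card_fin] at *
  omega

/-- Both distances to a center have the parity of `⌈n/2⌉`, so a distance beyond `⌈n/2⌉` is at
least `⌈n/2⌉ + 2`; this is incompatible with the bound `n + 1` on the sum of the distances. -/
theorem both_near_center₁_or_center₂ {P Q : Finset (Fin n)} (hP : #P % 2 = 0) (hQ : #Q % 2 = 0)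
    (hPQ : #(P ∆ Q) ≤ 2) :
    (#(center₁ x₀ ∆ P) ≤ (n + 1) / 2 ∧ #(center₁ x₀ ∆ Q) ≤ (n + 1) / 2) ∨
      (#(center₂ x₀ ∆ P) ≤ (n + 1) / 2 ∧ #(center₂ x₀ ∆ Q) ≤ (n + 1) / 2) := by
  have hdist (g R S : Finset (Fin n)) : #(g ∆ S) ≤ #(g ∆ R) + #(R ∆ S) := by
    rw [← symmDiff_symmDiff_cancel_left R S, ← symmDiff_assoc, symmDiff_symmDiff_cancel_left]
    exact card_symmDiff_le _ _
  have := hdist (center₁ x₀) P Q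
  have := hdist (center₁ x₀) Q P
  have := hdist (center₂ x₀) P Q
  have := hdist (center₂ x₀) Q P
  have := card_center₁_symmDiff_add_card_center₂_symmDiff_le x₀ P
  have := card_center₁_symmDiff_add_card_center₂_symmDiff_le x₀ Q
  have := card_symmDiff_mod_two (center₁ x₀) P
  have := card_symmDiff_mod_two (center₁ x₀) Q
  have := card_symmDiff_mod_two (center₂ x₀) P
  have := card_symmDiff_mod_two (center₂ x₀) Q
  have := card_center₁_mod_two x₀
  have := card_center₂_mod_two x₀
  rw [symmDiff_comm Q P] at *
  omega

end Centers

section EvenExtension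

variable {n : ℕ}

def evenBall (g : Finset (Fin n)) : Finset {P : Finset (Fin n) // #P % 2 = 0} :=
  univ.filter fun P => #(g ∆ P.1) ≤ (n + 1) / 2

lemma posDef_submatrix_of_subset_evenBall {y : Finset (Fin n) → ℝ}
    (hM : (momentMatrix (liftIndex n) y).PosSemidef) {t : ℝ} (ht₀ : 0 ≤ t) (ht₁ : t < 1)
    {g : Finset (Fin n)} (hg : #g % 2 = (n + 1) / 2 % 2)
    {u : Finset {P : Finset (Fin n) // #P % 2 = 0}} (hu : u ⊆ evenBall g) :
    ((t • momentMatrix (fun P => #P % 2 = 0) y + (1 - t) • 1).submatrix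
      ((↑) : u → {P : Finset (Fin n) // #P % 2 = 0}) (↑)).PosDef := by
  have hσ (P : u) : liftIndex n (g ∆ P.1.1) := by
    refine ⟨?_, (mem_filter.mp (hu P.2)).2⟩
    rw [card_symmDiff_mod_two, Nat.add_mod, hg, P.1.2]
    simp
  have : (t • momentMatrix (fun P => #P % 2 = 0) y + (1 - t) • 1).submatrix ((↑) : u → _) (↑) =
      t • (momentMatrix (liftIndex n) y).submatrix (fun P => ⟨_, hσ P⟩) (fun P => ⟨_, hσ P⟩) +
        (1 - t) • 1 := by
    ext P Q
    simp only [Matrix.add_apply, Matrix.smul_apply, submatrix_apply, momentMatrix, of_apply,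
      symmDiff_symmDiff_symmDiff_comm g, symmDiff_self, bot_symmDiff, one_apply, Subtype.val_inj]
  rw [this]
  exact PosDef.posSemidef_add ((hM.submatrix _).smul ht₀) (PosDef.one.smul (by linarith))

theorem exists_posSemidef_even_extension (x₀ : Fin n) {y : Finset (Fin n) → ℝ} (hy : y ∅ = 1)
    (hM : (momentMatrix (liftIndex n) y).PosSemidef) {t : ℝ} (ht₀ : 0 ≤ t) (ht₁ : t < 1) :
    ∃ N : Matrix {P : Finset (Fin n) // #P % 2 = 0} {P : Finset (Fin n) // #P % 2 = 0} ℝ,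
      N.PosSemidef ∧ (∀ P, N P P = 1) ∧ ∀ P Q, #(P.1 ∆ Q.1) = 2 → N P Q = t * y (P.1 ∆ Q.1) := by
  set f := t • momentMatrix (fun P => #P % 2 = 0) y + (1 - t) • 1
  have hf : fᵀ = f := by
    ext P Q
    simp [f, momentMatrix, symmDiff_comm, one_apply, eq_comm]
  have hcommon (P Q : {P : Finset (Fin n) // #P % 2 = 0}) (hPQ : #(P.1 ∆ Q.1) ≤ 2) :
      (P ∈ evenBall (center₁ x₀) ∧ Q ∈ evenBall (center₁ x₀)) ∨
        (P ∈ evenBall (center₂ x₀) ∧ Q ∈ evenBall (center₂ x₀)) := by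
    simpa [evenBall] using both_near_center₁_or_center₂ x₀ P.2 Q.2 hPQ
  have hcover : evenBall (center₁ x₀) ∪ evenBall (center₂ x₀) = univ := by
    ext P
    simpa using (hcommon P P (by simp)).imp And.left And.left
  have hN (P Q) (hPQ : #(P.1 ∆ Q.1) ≤ 2) :
      twoBlockCompletion f (evenBall (center₁ x₀)) (evenBall (center₂ x₀)) P Q = f P Q :=
    twoBlockCompletion_apply f (hcommon P Q hPQ)
  refine ⟨_, posSemidef_twoBlockCompletion hf hcover
    (posDef_submatrix_of_subset_evenBall hM ht₀ ht₁ (card_center₁_mod_two x₀) subset_rfl).posSemidef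
    (posDef_submatrix_of_subset_evenBall hM ht₀ ht₁ (card_center₂_mod_two x₀) subset_rfl).posSemidef
    (posDef_submatrix_of_subset_evenBall hM ht₀ ht₁ (card_center₁_mod_two x₀) inter_subset_left),
    fun P => ?_, fun P Q hPQ => ?_⟩
  · rw [hN P P (by simp)]
    simp [f, momentMatrix, hy]
  · have hne : P ≠ Q := by rintro rfl; simp at hPQ
    rw [hN P Q hPQ.le]
    simp [f, momentMatrix, hne]

end EvenExtension

/-- **PSD lift of the cut polytope (Corollary 3).** The cut polytope
`CUT_n = conv{(x_i x_j)_{i<j} : x ∈ {-1,1}^n}` equals the projection of a slice of the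
cone of real PSD matrices indexed by `T`, the family of subsets `S ⊆ [n]` with
`|S| ≤ ⌈n/2⌉` and `|S| ≡ ⌈n/2⌉ (mod 2)`: a point `ℓ` lies in `CUT_n` iff there is a
family `y = (y_A)` (indexed by symmetric differences of members of `T`) with `y_∅ = 1`,
`y_{{i,j}} = ℓ_{ij}`, and `[y_{S Δ S'}]_{S,S' ∈ T}` positive semidefinite. -/
theorem cut_polytope_psd_lift (n : ℕ) (hn : 2 ≤ n) :
    convexHull ℝ {ℓ : {p : Fin n × Fin n // p.1 < p.2} → ℝ |
        ∃ x : Fin n → ℝ, (∀ i, x i = 1 ∨ x i = -1) ∧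
          ℓ = fun p => x p.1.1 * x p.1.2} =
    {ℓ : {p : Fin n × Fin n // p.1 < p.2} → ℝ |
      ∃ y : Finset (Fin n) → ℝ,
        y ∅ = 1 ∧
        (∀ p : {p : Fin n × Fin n // p.1 < p.2}, y {p.1.1, p.1.2} = ℓ p) ∧
        (Matrix.of fun s t : {s : Finset (Fin n) //
              s.card % 2 = ((n + 1) / 2) % 2 ∧ s.card ≤ (n + 1) / 2} =>
            y ((s : Finset (Fin n)) ∆ (t : Finset (Fin n)))).PosSemidef} := by
  show convexHull ℝ (cutVertices (Fin n)) = psdLift (Fin n) (liftIndex n)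
  refine (convexHull_min (cutVertices_subset_psdLift _) (convex_psdLift _)).antisymm ?_
  rintro ℓ ⟨y, hy, hyℓ, hM⟩
  let x₀ : Fin n := ⟨0, by omega⟩
  refine mem_of_forall_lt_one_smul_mem (finite_cutVertices.isClosed_convexHull ℝ)
    fun t ht₀ ht₁ => ?_
  obtain ⟨N, hN, hdiag, hpair⟩ := exists_posSemidef_even_extension x₀ hy hM ht₀ ht₁
  refine mem_convexHull_cutVertices_of_posSemidef (hN.submatrix (toEven x₀))
    (fun U => hdiag _) fun U q => ?_
  have hq : #({q.1.1, q.1.2} : Finset (Fin n)) = 2 := card_pair q.2.ne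
  have hfold := coe_toEven_symmDiff x₀ U (A := {q.1.1, q.1.2}) (by rw [hq])
  rw [submatrix_apply, hpair _ _ (by rw [hfold, symmDiff_symmDiff_cancel_left, hq]), hfold,
    symmDiff_symmDiff_cancel_left, hyℓ, Pi.smul_apply, smul_eq_mul]
end

section
/- Let N ≥ 2 be an integer. Write N = Σ_{j=1}^l 2^{k_j} where k_1 < k_2 < … < k_l are the positions of the nonzero digits in the binary expansion of N, and let k be the largest integer with 2^k < N (so k = k_1 − 1 if N is a power of two, and k = k_l otherwise). Let T ⊆ ℤ_{N+1} be the image modulo N+1 of the set of integers {0} ∪ {−2^i, 2^i : i = 0, …, k} ∪ { Σ_{j=1}^i 2^{k_j} : i = 1, …, l−1 }. Then the cycle graph C_{N+1} on N+1 vertices admits a chordal cover Γ such that for every maximal clique C of Γ there exists t ∈ ℤ_{N+1} with t + C := {t + c : c ∈ C} ⊆ T. -/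
open scoped Classical

/-- A simple graph is chordal if every cycle of length at least 4 has a chord. -/
def IsChordal {V : Type*} (Γ : SimpleGraph V) : Prop :=
  ∀ ⦃u : V⦄ (c : Γ.Walk u u), c.IsCycle → 4 ≤ c.length →
    ∃ v w, v ∈ c.support ∧ w ∈ c.support ∧ Γ.Adj v w ∧ s(v, w) ∉ c.edges

/-!
Identify `ℤ_{N+1}` with `{0, …, N}` and cut the path `0, 1, …, N` into consecutive blocks
`[S_i, S_{i+1}]` of length `2^{k_{i+1}}`, where `S_i = Σ_{j ≤ i} 2^{k_j}`. Triangulate every block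
dyadically (join `S_i + c·2^j` to `S_i + (c+1)·2^j`) and join `0` to every `S_i` by a fan. The
result is a triangulation of the `(N+1)`-gon, and it is chordal because the following order is a
perfect elimination order: first the interior points of the blocks, by increasing 2-adic valuation
of their offset `d` in the block (the later neighbours of such a point are the points at offsets
`d ± 2^{v₂(d)}`, which are joined), then `S_l, …, S_1, 0` (the later neighbours of `S_i` are
`S_{i-1}` and `0`).
Every edge `a < b` has `b - a` a power of two at most `N = S_l ≡ -1` or `b - a = S_i`, so
translating a clique by minus its least element puts it into `T`.
-/

namespace SimpleGraph

variable {V α : Type*} [LinearOrder α] {Γ : SimpleGraph V}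

def IsPerfectEliminationOrder (Γ : SimpleGraph V) (f : V → α) : Prop :=
  Function.Injective f ∧ ∀ ⦃v a b⦄, Γ.Adj v a → Γ.Adj v b → f v < f a → f v < f b → a ≠ b →
    Γ.Adj a b

lemma Walk.IsCycle.mk_snd_penultimate_notMem_edges {u : V} {c : Γ.Walk u u} (hc : c.IsCycle)
    (hlen : 4 ≤ c.length) : s(c.snd, c.penultimate) ∉ c.edges := by
  intro hmem
  have hne : c.edges ≠ [] := List.ne_nil_of_mem (c.mk_start_snd_mem_edges hc.not_nil)
  rw [← List.cons_head_tail hne, List.mem_cons, Walk.head_edges_eq_mk_start_snd,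
    ← Walk.edges_tail] at hmem
  rcases hmem with h | h
  · rcases Sym2.eq_iff.mp h with ⟨h1, -⟩ | ⟨-, h2⟩
    · exact (c.adj_snd hc.not_nil).ne' h1
    · exact (c.adj_penultimate hc.not_nil).ne h2
  · have h2 : c.getVert (c.length - 1) = c.getVert 2 := by
      rw [← Walk.penultimate, hc.isPath_tail.eq_snd_of_mem_edges h, Walk.snd, Walk.getVert_tail]
    have := hc.getVert_injOn (by simp; omega) (by simp; omega) h2
    omega

/-- The chord joins the two cycle-neighbours of the vertex of the cycle that comes first. -/
theorem IsPerfectEliminationOrder.isChordal {f : V → α} (hf : Γ.IsPerfectEliminationOrder f) :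
    IsChordal Γ := by
  intro u c hc hlen
  obtain ⟨v, hv, hmin⟩ := c.support.toFinset.exists_min_image f ⟨u, by simp⟩
  rw [List.mem_toFinset] at hv
  set c' := c.rotate v hv
  have hc' : c'.IsCycle := hc.rotate hv
  have hedges : ∀ {e}, e ∈ c'.edges ↔ e ∈ c.edges := (c.rotate_edges v hv).mem_iff
  have hsnd : c'.snd ∈ c.support :=
    c.snd_mem_support_of_mem_edges (hedges.mp (c'.mk_start_snd_mem_edges hc'.not_nil))
  have hpen : c'.penultimate ∈ c.support :=
    c.fst_mem_support_of_mem_edges (hedges.mp (c'.mk_penultimate_end_mem_edges hc'.not_nil))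
  have hlt : ∀ w ∈ c.support, w ≠ v → f v < f w := fun w hw hne =>
    (hmin w (List.mem_toFinset.mpr hw)).lt_of_ne fun h => hne (hf.1 h).symm
  have hadj₁ := c'.adj_snd hc'.not_nil
  have hadj₂ := c'.adj_penultimate hc'.not_nil
  refine ⟨c'.snd, c'.penultimate, hsnd, hpen, hf.2 hadj₁ hadj₂.symm (hlt _ hsnd hadj₁.ne')
    (hlt _ hpen hadj₂.ne) hc'.snd_ne_penultimate, fun h => ?_⟩
  exact hc'.mk_snd_penultimate_notMem_edges (by simpa [c'] using hlen) (hedges.mpr h)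

lemma IsPerfectEliminationOrder.comap {W : Type*} {f : V → α}
    (hf : Γ.IsPerfectEliminationOrder f) {g : W → V} (hg : Function.Injective g) :
    (Γ.comap g).IsPerfectEliminationOrder (f ∘ g) :=
  ⟨hf.1.comp hg, fun _ _ _ hva hvb ha hb hab => hf.2 hva hvb ha hb (hg.ne hab)⟩

lemma adj_of_eq_or_eq {x y a b : V} (hxy : x ≠ y → Γ.Adj x y) (ha : a = x ∨ a = y)
    (hb : b = x ∨ b = y) (hab : a ≠ b) : Γ.Adj a b := by
  rcases ha with rfl | rfl <;> rcases hb with rfl | rfl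
  · exact absurd rfl hab
  · exact hxy hab
  · exact (hxy hab.symm).symm
  · exact absurd rfl hab

end SimpleGraph

def DyadicStep (K d e : ℕ) : Prop := ∃ j, 2 ^ j ∣ d ∧ e = d + 2 ^ j ∧ e ≤ 2 ^ K

lemma not_two_pow_succ_dvd_add {j x : ℕ} (h : 2 ^ (j + 1) ∣ x) : ¬ 2 ^ (j + 1) ∣ x + 2 ^ j := by
  rw [Nat.dvd_add_right h, Nat.pow_dvd_pow_iff_le_right (by norm_num)]
  omega

lemma two_pow_le_of_emultiplicity_eq {m d : ℕ} (hm : emultiplicity 2 d = m) : 2 ^ m ≤ d := by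
  have hd0 : d ≠ 0 := by rintro rfl; simp at hm
  exact Nat.le_of_dvd (Nat.pos_of_ne_zero hd0) (emultiplicity_eq_coe.mp hm).1

lemma lt_of_emultiplicity_two_eq {K m d : ℕ} (hd : d < 2 ^ K) (hm : emultiplicity 2 d = m) :
    m < K :=
  (Nat.pow_lt_pow_iff_right (by norm_num)).mp ((two_pow_le_of_emultiplicity_eq hm).trans_lt hd)

namespace DyadicStep

variable {K d e : ℕ}

lemma lt (h : DyadicStep K d e) : d < e := by
  obtain ⟨j, -, rfl, -⟩ := h
  exact Nat.lt_add_of_pos_right (Nat.two_pow_pos j)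

lemma le_two_pow (h : DyadicStep K d e) : e ≤ 2 ^ K := by
  obtain ⟨j, -, -, he⟩ := h
  exact he

lemma sub_add {m : ℕ} (hd : d < 2 ^ K) (hm : emultiplicity 2 d = m) :
    DyadicStep K (d - 2 ^ m) (d + 2 ^ m) := by
  have hmK := lt_of_emultiplicity_two_eq hd hm
  obtain ⟨⟨q, rfl⟩, hodd⟩ := emultiplicity_eq_coe.mp hm
  obtain ⟨c, rfl⟩ : ∃ c, q = 2 * c + 1 := by
    refine ⟨q / 2, Nat.two_mul_div_two_add_one_of_odd (Nat.odd_iff.mpr ?_) |>.symm⟩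
    by_contra h
    exact hodd (pow_succ 2 m ▸ mul_dvd_mul_left _ (Nat.dvd_of_mod_eq_zero (by omega)))
  have hK : 2 ^ K = 2 ^ m * (2 * 2 ^ (K - m - 1)) := by
    rw [← pow_succ', ← pow_add]; congr 1; omega
  have hc : c + 1 ≤ 2 ^ (K - m - 1) := by
    rw [hK] at hd
    have := Nat.lt_of_mul_lt_mul_left hd
    omega
  have hsub : 2 ^ m * (2 * c + 1) - 2 ^ m = 2 ^ (m + 1) * c := Nat.sub_eq_of_eq_add (by ring)
  refine ⟨m + 1, ⟨c, hsub⟩, by rw [hsub]; ring, ?_⟩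
  rw [hK]; nlinarith

lemma eq_or_emultiplicity_lt {m : ℕ} (hd : d < 2 ^ K) (hm : emultiplicity 2 d = m)
    (h : DyadicStep K d e ∨ DyadicStep K e d) :
    e + 2 ^ m = d ∨ e = d + 2 ^ m ∨ (e < 2 ^ K ∧ emultiplicity 2 e < m) := by
  obtain ⟨hdvd, -⟩ := emultiplicity_eq_coe.mp hm
  have hmK := lt_of_emultiplicity_two_eq hd hm
  have hle : ∀ {j}, 2 ^ j ∣ d → j ≤ m := fun hj => by
    exact_mod_cast hm ▸ pow_dvd_iff_le_emultiplicity.mp hj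
  have hsucc : ∀ {j}, j < m → 2 ^ (j + 1) ∣ d := fun hj => (pow_dvd_pow 2 hj).trans hdvd
  rcases h with ⟨j, hj, rfl, he⟩ | ⟨j, hj, rfl, -⟩
  · rcases (hle hj).eq_or_lt with rfl | hjm
    · exact Or.inr (Or.inl rfl)
    refine Or.inr (Or.inr ⟨he.lt_of_ne fun hK => not_two_pow_succ_dvd_add (hsucc hjm) ?_, ?_⟩)
    · exact hK ▸ pow_dvd_pow 2 (by omega)
    · rw [emultiplicity_eq_coe.mpr ⟨dvd_add hj dvd_rfl, not_two_pow_succ_dvd_add (hsucc hjm)⟩]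
      exact_mod_cast hjm
  · rcases (hle (dvd_add hj dvd_rfl)).eq_or_lt with rfl | hjm
    · exact Or.inl rfl
    refine Or.inr (Or.inr ⟨by omega, ?_⟩)
    rw [emultiplicity_eq_coe.mpr ⟨hj, fun h => not_two_pow_succ_dvd_add h (hsucc hjm)⟩]
    exact_mod_cast hjm

end DyadicStep

namespace CycleTriangulation

variable (kk : ℕ → ℕ) (l : ℕ)

def prefixSum (i : ℕ) : ℕ := ∑ j ∈ Finset.range i, 2 ^ kk j

/-- The index `i` of the block `[S_i, S_{i+1})` containing `n`; it is `l` for every `n ≥ S_l`. -/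
def block (n : ℕ) : ℕ := Nat.findGreatest (fun i => prefixSum kk i ≤ n) l

def offset (n : ℕ) : ℕ := n - prefixSum kk (block kk l n)

def TriangulationRel (a b : ℕ) : Prop :=
  (∃ i < l, ∃ d e, DyadicStep (kk i) d e ∧ a = prefixSum kk i + d ∧ b = prefixSum kk i + e) ∨
    (a = 0 ∧ ∃ i, 1 ≤ i ∧ i ≤ l ∧ b = prefixSum kk i)

def triangulation : SimpleGraph ℕ := SimpleGraph.fromRel (TriangulationRel kk l)

/-- Interior points of the blocks come first, by the 2-adic valuation of their offset; the block
endpoints `S_i` have offset `0`, hence valuation `⊤`, and come last, in decreasing order. -/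
noncomputable def eliminationKey (n : ℕ) : ℕ∞ ×ₗ ℕᵒᵈ :=
  toLex (emultiplicity 2 (offset kk l n), OrderDual.toDual n)

variable {kk l}

@[simp] lemma prefixSum_zero : prefixSum kk 0 = 0 := rfl

lemma prefixSum_succ (i : ℕ) : prefixSum kk (i + 1) = prefixSum kk i + 2 ^ kk i :=
  Finset.sum_range_succ _ _

lemma prefixSum_strictMono : StrictMono (prefixSum kk) :=
  strictMono_nat_of_lt_succ fun i => by
    rw [prefixSum_succ]; exact Nat.lt_add_of_pos_right (Nat.two_pow_pos _)

lemma prefixSum_block_le (n : ℕ) : prefixSum kk (block kk l n) ≤ n :=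
  Nat.findGreatest_spec (P := fun i => prefixSum kk i ≤ n) (Nat.zero_le l) (by simp)

lemma block_le (n : ℕ) : block kk l n ≤ l := Nat.findGreatest_le l

lemma lt_prefixSum_block_succ {n : ℕ} (h : block kk l n < l) :
    n < prefixSum kk (block kk l n + 1) :=
  not_le.mp (Nat.findGreatest_is_greatest (P := fun i => prefixSum kk i ≤ n) (Nat.lt_succ_self _) h)

lemma prefixSum_block_add_offset (n : ℕ) : prefixSum kk (block kk l n) + offset kk l n = n :=
  Nat.add_sub_of_le (prefixSum_block_le n)

lemma offset_lt {n : ℕ} (h : block kk l n < l) : offset kk l n < 2 ^ kk (block kk l n) := by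
  have := lt_prefixSum_block_succ h
  rw [prefixSum_succ] at this
  have := prefixSum_block_add_offset (kk := kk) (l := l) n
  omega

lemma block_eq {i n : ℕ} (hi : i ≤ l) (h1 : prefixSum kk i ≤ n)
    (h2 : i < l → n < prefixSum kk (i + 1)) : block kk l n = i := by
  refine Nat.findGreatest_eq_iff.mpr ⟨hi, fun _ => h1, fun j hij hjl hj => ?_⟩
  have := prefixSum_strictMono.monotone (show i + 1 ≤ j from hij) (f := prefixSum kk)
  have := h2 (by omega)
  omega

lemma offset_prefixSum {i : ℕ} (hi : i ≤ l) : offset kk l (prefixSum kk i) = 0 := by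
  rw [offset, block_eq hi le_rfl fun _ => prefixSum_strictMono (Nat.lt_succ_self i),
    Nat.sub_self]

lemma block_prefixSum_add {i e : ℕ} (hi : i < l) (he : e < 2 ^ kk i) :
    block kk l (prefixSum kk i + e) = i :=
  block_eq hi.le (Nat.le_add_right _ _) fun _ => by rw [prefixSum_succ]; omega

lemma offset_prefixSum_add {i e : ℕ} (hi : i < l) (he : e < 2 ^ kk i) :
    offset kk l (prefixSum kk i + e) = e := by
  rw [offset, block_prefixSum_add hi he, Nat.add_sub_cancel_left]

lemma eliminationKey_lt_iff {a b : ℕ} :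
    eliminationKey kk l a < eliminationKey kk l b ↔
      emultiplicity 2 (offset kk l a) < emultiplicity 2 (offset kk l b) ∨
        emultiplicity 2 (offset kk l a) = emultiplicity 2 (offset kk l b) ∧ b < a := by
  simp [eliminationKey, Prod.Lex.toLex_lt_toLex]

lemma TriangulationRel.lt {a b : ℕ} (h : TriangulationRel kk l a b) : a < b := by
  rcases h with ⟨i, -, d, e, hde, rfl, rfl⟩ | ⟨rfl, i, hi, -, rfl⟩
  · exact Nat.add_lt_add_left hde.lt _
  · exact prefixSum_strictMono (show 0 < i by omega)

lemma TriangulationRel.exists_eq_add {a b : ℕ} (h : TriangulationRel kk l a b) :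
    (∃ j, 2 ^ j < prefixSum kk l ∧ b = a + 2 ^ j) ∨ b = a + prefixSum kk l ∨
      ∃ i, 1 ≤ i ∧ i < l ∧ b = a + prefixSum kk i := by
  rcases h with ⟨i, hi, d, e, ⟨j, -, rfl, he⟩, rfl, rfl⟩ | ⟨rfl, i, h1, hi, rfl⟩
  · have := prefixSum_strictMono.monotone (show i + 1 ≤ l from hi) (f := prefixSum kk)
    rw [prefixSum_succ] at this
    rcases (show 2 ^ j ≤ prefixSum kk l by omega).lt_or_eq with hj | hj
    · exact Or.inl ⟨j, hj, by ring⟩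
    · exact Or.inr (Or.inl (by rw [← hj]; ring))
  · rcases hi.lt_or_eq with hi | rfl
    · exact Or.inr (Or.inr ⟨i, h1, hi, by ring⟩)
    · exact Or.inr (Or.inl (by ring))

lemma TriangulationRel.eq_zero_or_eq_succ {p q : ℕ}
    (h : TriangulationRel kk l (prefixSum kk p) (prefixSum kk q)) : p = 0 ∨ q = p + 1 := by
  have hpq := prefixSum_strictMono.lt_iff_lt.mp h.lt
  rcases h with ⟨i, -, d, e, hde, hp, hq⟩ | ⟨hp, -⟩
  · have h1 : i ≤ p := (prefixSum_strictMono (kk := kk)).le_iff_le.mp (by omega)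
    have h2 : q ≤ i + 1 := (prefixSum_strictMono (kk := kk)).le_iff_le.mp (by
      rw [prefixSum_succ]; have := hde.le_two_pow; omega)
    omega
  · exact Or.inl (prefixSum_strictMono.injective (hp.trans prefixSum_zero.symm))

lemma triangulation_adj_iff_of_lt {a b : ℕ} (hab : a < b) :
    (triangulation kk l).Adj a b ↔ TriangulationRel kk l a b := by
  rw [triangulation, SimpleGraph.fromRel_adj]
  exact ⟨fun ⟨_, h⟩ => h.resolve_right fun h' => (h'.lt.trans hab).false,
    fun h => ⟨hab.ne, Or.inl h⟩⟩

lemma triangulation_adj_succ {n : ℕ} (hn : n < prefixSum kk l) :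
    (triangulation kk l).Adj n (n + 1) := by
  have hl : block kk l n < l := (block_le n).lt_of_ne fun h => by
    have := prefixSum_block_le (kk := kk) (l := l) n
    rw [h] at this
    omega
  have hn := prefixSum_block_add_offset (kk := kk) (l := l) n
  exact (triangulation_adj_iff_of_lt n.lt_succ_self).mpr
    (Or.inl ⟨_, hl, _, _, ⟨0, one_dvd _, rfl, offset_lt hl⟩, hn.symm, by omega⟩)

lemma triangulation_adj_zero {i : ℕ} (h1 : 1 ≤ i) (hi : i ≤ l) :
    (triangulation kk l).Adj 0 (prefixSum kk i) :=
  (triangulation_adj_iff_of_lt (prefixSum_strictMono h1)).mpr (Or.inr ⟨rfl, i, h1, hi, rfl⟩)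

lemma triangulation_adj_sub_add {v m : ℕ} (hm : emultiplicity 2 (offset kk l v) = m)
    (hl : block kk l v < l) : (triangulation kk l).Adj (v - 2 ^ m) (v + 2 ^ m) := by
  have hle := two_pow_le_of_emultiplicity_eq hm
  have hv := prefixSum_block_add_offset (kk := kk) (l := l) v
  have := Nat.two_pow_pos m
  exact (triangulation_adj_iff_of_lt (by omega)).mpr
    (Or.inl ⟨_, hl, _, _, DyadicStep.sub_add (offset_lt hl) hm, by omega, by omega⟩)

lemma exists_dyadicStep_of_adj {v b : ℕ} (hv : offset kk l v ≠ 0)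
    (hadj : (triangulation kk l).Adj v b) : block kk l v < l ∧ ∃ e,
      (DyadicStep (kk (block kk l v)) (offset kk l v) e ∨
        DyadicStep (kk (block kk l v)) e (offset kk l v)) ∧
      b = prefixSum kk (block kk l v) + e := by
  have hblock : ∀ {i d}, i < l → d ≤ 2 ^ kk i → v = prefixSum kk i + d →
      block kk l v = i ∧ offset kk l v = d := by
    intro i d hi hd hvd
    subst hvd
    have hd : d < 2 ^ kk i := hd.lt_of_ne fun hd' => hv (by
      rw [hd', ← prefixSum_succ]; exact offset_prefixSum hi)
    exact ⟨block_prefixSum_add hi hd, offset_prefixSum_add hi hd⟩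
  obtain ⟨-, h | h⟩ := hadj
  · rcases h with ⟨i, hi, d, e, hde, hvd, rfl⟩ | ⟨rfl, -⟩
    · obtain ⟨hb, ho⟩ := hblock hi (hde.lt.le.trans hde.le_two_pow) hvd
      exact ⟨hb ▸ hi, e, by rw [hb, ho]; exact Or.inl hde, by rw [hb]⟩
    · exact absurd (offset_prefixSum (Nat.zero_le l)) hv
  · rcases h with ⟨i, hi, d, e, hde, rfl, hve⟩ | ⟨-, i, -, hi, rfl⟩
    · obtain ⟨hb, ho⟩ := hblock hi hde.le_two_pow hve
      exact ⟨hb ▸ hi, d, by rw [hb, ho]; exact Or.inr hde, by rw [hb]⟩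
    · exact absurd (offset_prefixSum hi) hv

lemma eq_sub_or_eq_add_of_adj {v b m : ℕ} (hm : emultiplicity 2 (offset kk l v) = m)
    (hadj : (triangulation kk l).Adj v b)
    (hkey : eliminationKey kk l v < eliminationKey kk l b) : b + 2 ^ m = v ∨ b = v + 2 ^ m := by
  have hv0 : offset kk l v ≠ 0 := by rintro h; simp [h] at hm
  obtain ⟨hl, e, hstep, rfl⟩ := exists_dyadicStep_of_adj hv0 hadj
  have hv := prefixSum_block_add_offset (kk := kk) (l := l) v
  rcases DyadicStep.eq_or_emultiplicity_lt (offset_lt hl) hm hstep with h | h | ⟨he, hlt⟩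
  · omega
  · omega
  · rw [eliminationKey_lt_iff, offset_prefixSum_add hl he, hm] at hkey
    rcases hkey with h | ⟨h, -⟩
    · exact absurd (h.trans hlt) (lt_irrefl _)
    · exact absurd (h ▸ hlt) (lt_irrefl _)

lemma eq_zero_or_eq_prefixSum_pred_of_adj {v b : ℕ} (hv : offset kk l v = 0)
    (hadj : (triangulation kk l).Adj v b)
    (hkey : eliminationKey kk l v < eliminationKey kk l b) :
    b = 0 ∨ b = prefixSum kk (block kk l v - 1) := by
  rw [eliminationKey_lt_iff, hv, emultiplicity_zero] at hkey
  obtain ⟨htop, hbv⟩ : emultiplicity 2 (offset kk l b) = ⊤ ∧ b < v := by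
    simpa [eq_comm] using hkey
  have hb : offset kk l b = 0 := by simpa [Nat.finiteMultiplicity_iff] using htop
  have hv' := prefixSum_block_add_offset (kk := kk) (l := l) v
  have hb' := prefixSum_block_add_offset (kk := kk) (l := l) b
  rw [hv, add_zero] at hv'
  rw [hb, add_zero] at hb'
  have hrel := (triangulation_adj_iff_of_lt hbv).mp hadj.symm
  rw [← hv', ← hb'] at hrel
  rcases hrel.eq_zero_or_eq_succ with h | h
  · left; rw [← hb', h, prefixSum_zero]
  · right; rw [← hb', h, Nat.add_sub_cancel]

theorem isPerfectEliminationOrder_eliminationKey :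
    (triangulation kk l).IsPerfectEliminationOrder (eliminationKey kk l) := by
  refine ⟨fun a b h => by simpa [eliminationKey] using congrArg (fun x => (ofLex x).2) h,
    fun v a b hva hvb ha hb hab => ?_⟩
  by_cases hv : offset kk l v = 0
  · refine SimpleGraph.adj_of_eq_or_eq (fun hne => triangulation_adj_zero ?_ ?_)
      (eq_zero_or_eq_prefixSum_pred_of_adj hv hva ha)
      (eq_zero_or_eq_prefixSum_pred_of_adj hv hvb hb) hab
    · exact Nat.pos_of_ne_zero fun h => hne (by rw [h, prefixSum_zero])
    · exact (Nat.sub_le _ _).trans (block_le v)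
  · obtain ⟨m, hm⟩ : ∃ m : ℕ, emultiplicity 2 (offset kk l v) = m :=
      ⟨_, (Nat.finiteMultiplicity_iff.mpr
        ⟨by norm_num, Nat.pos_of_ne_zero hv⟩).emultiplicity_eq_multiplicity⟩
    have hle := two_pow_le_of_emultiplicity_eq hm
    have hv' := prefixSum_block_add_offset (kk := kk) (l := l) v
    have hlater : ∀ {b}, (triangulation kk l).Adj v b →
        eliminationKey kk l v < eliminationKey kk l b → b = v - 2 ^ m ∨ b = v + 2 ^ m :=
      fun hvb hb => by have := eq_sub_or_eq_add_of_adj hm hvb hb; omega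
    exact SimpleGraph.adj_of_eq_or_eq
      (fun _ => triangulation_adj_sub_add hm (exists_dyadicStep_of_adj hv hva).1)
      (hlater hva ha) (hlater hvb hb) hab

end CycleTriangulation

lemma fromRel_sub_eq_one_le_comap_val {N : ℕ} (G : SimpleGraph ℕ)
    (hsucc : ∀ n < N, G.Adj n (n + 1)) (hwrap : G.Adj 0 N) :
    SimpleGraph.fromRel (fun i j : ZMod (N + 1) => i - j = 1) ≤ G.comap ZMod.val := by
  suffices h : ∀ x y : ZMod (N + 1), x - y = 1 → G.Adj y.val x.val by
    rintro x y ⟨-, hxy | hyx⟩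
    · exact (h x y hxy).symm
    · exact h y x hyx
  intro x y hxy
  have hx : x.val = (y.val + 1) % (N + 1) := by
    have : x = ((y.val + 1 : ℕ) : ZMod (N + 1)) := by
      rw [Nat.cast_succ, ZMod.natCast_zmod_val]
      linear_combination hxy
    rw [this, ZMod.val_natCast]
  rcases (Nat.lt_succ_iff.mp (ZMod.val_lt y)).lt_or_eq with hy | hy
  · rw [hx, Nat.mod_eq_of_lt (by omega)]
    exact hsucc _ hy
  · rw [hx, hy, Nat.mod_self]
    exact hwrap.symm

lemma sub_eq_natCast_of_val_eq_add {n : ℕ} [NeZero n] {x y : ZMod n} {δ : ℕ}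
    (h : y.val = x.val + δ) : y - x = δ := by
  rw [← ZMod.natCast_zmod_val y, h, Nat.cast_add, ZMod.natCast_zmod_val, add_sub_cancel_left]

lemma exists_add_image_subset_of_isClique {n : ℕ} [NeZero n] {Γ : SimpleGraph (ZMod n)}
    {T : Set (ZMod n)} (h0 : 0 ∈ T) (hT : ∀ x y, Γ.Adj x y → x.val < y.val → y - x ∈ T)
    {C : Set (ZMod n)} (hC : Γ.IsClique C) : ∃ t : ZMod n, (fun c => t + c) '' C ⊆ T := by
  rcases C.eq_empty_or_nonempty with rfl | hne
  · exact ⟨0, by simp⟩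
  obtain ⟨x, hx, hmin⟩ := C.exists_min_image ZMod.val C.toFinite hne
  refine ⟨-x, ?_⟩
  rintro _ ⟨u, hu, rfl⟩
  rcases eq_or_ne u x with rfl | hux
  · simpa using h0
  · show -x + u ∈ T
    rw [neg_add_eq_sub]
    exact hT x u (hC hx hu hux.symm)
      ((hmin u hu).lt_of_ne fun h => hux (ZMod.val_injective n h).symm)

theorem cycle_triangulation_succ_general
    (N : ℕ) (hN : 2 ≤ N)
    (l : ℕ) (kk : ℕ → ℕ)
    (hsum : N = ∑ j ∈ Finset.range l, 2 ^ kk j)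
    (k : ℕ) (hkmax : ∀ k', 2 ^ k' < N → k' ≤ k) :
    let T : Finset (ZMod (N + 1)) :=
      {(0 : ZMod (N + 1))} ∪
        (Finset.range (k + 1)).image (fun i => (((2 : ℤ) ^ i : ℤ) : ZMod (N + 1))) ∪
        (Finset.range (k + 1)).image (fun i => ((-((2 : ℤ) ^ i) : ℤ) : ZMod (N + 1))) ∪
        (Finset.Icc 1 (l - 1)).image
          (fun i => ((∑ j ∈ Finset.range i, 2 ^ kk j : ℕ) : ZMod (N + 1)))
    ∃ Γ : SimpleGraph (ZMod (N + 1)),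
      IsChordal Γ ∧
      (SimpleGraph.fromRel fun i j : ZMod (N + 1) => i - j = 1) ≤ Γ ∧
      ∀ C : Set (ZMod (N + 1)), Γ.IsClique C →
        (∀ C', Γ.IsClique C' → C ⊆ C' → C' = C) →
        ∃ t : ZMod (N + 1), (fun c => t + c) '' C ⊆ ↑T := by
  intro T
  open CycleTriangulation in
  have hsl : prefixSum kk l = N := hsum.symm
  have hl : 1 ≤ l := Nat.pos_of_ne_zero fun h => by simp [h] at hsum; omega
  have hN1 : ((N : ℕ) : ZMod (N + 1)) = -1 := by
    rw [eq_neg_iff_add_eq_zero, ← Nat.cast_add_one, ZMod.natCast_self]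
  have hmem : ∀ x y : ZMod (N + 1), TriangulationRel kk l x.val y.val → y - x ∈ T := by
    intro x y hrel
    simp only [T, Finset.mem_union, Finset.mem_singleton, Finset.mem_image, Finset.mem_range,
      Finset.mem_Icc]
    rcases hrel.exists_eq_add with ⟨j, hj, h⟩ | h | ⟨i, h1, hi, h⟩ <;>
      rw [sub_eq_natCast_of_val_eq_add h]
    · have hjk := hkmax j (hsl ▸ hj)
      exact Or.inl (Or.inl (Or.inr ⟨j, Nat.lt_succ_of_le hjk, by push_cast; rfl⟩))
    · rw [hsl, hN1]
      exact Or.inl (Or.inr ⟨0, Nat.succ_pos k, by simp⟩)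
    · exact Or.inr ⟨i, ⟨h1, by omega⟩, rfl⟩
  refine ⟨(triangulation kk l).comap ZMod.val,
    (isPerfectEliminationOrder_eliminationKey.comap (ZMod.val_injective _)).isChordal,
    fromRel_sub_eq_one_le_comap_val _ (fun n hn => triangulation_adj_succ (hsl ▸ hn))
      (hsl ▸ triangulation_adj_zero hl le_rfl),
    fun C hC _ => exists_add_image_subset_of_isClique (by simp [T]) ?_ hC⟩
  exact fun x y hxy hlt => hmem x y ((triangulation_adj_iff_of_lt hlt).mp hxy)

/-- **Theorem 7: triangulation of the `(N+1)`-cycle.** Write `N = Σ_{j=1}^l 2^{k_j}`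
with `k_1 < … < k_l` (binary expansion; here `kk j = k_{j+1}`) and let `k` be the
largest integer with `2^k < N`. Let `T ⊆ ℤ_{N+1}` be the image mod `N+1` of
`{0} ∪ {±2^i : 0 ≤ i ≤ k} ∪ {Σ_{j=1}^i 2^{k_j} : 1 ≤ i ≤ l−1}`. Then the cycle graph
`C_{N+1}` has a chordal cover all of whose maximal cliques have a translate contained
in `T`. -/
theorem cycle_triangulation_succ
    (N : ℕ) (hN : 2 ≤ N)
    (l : ℕ) (kk : ℕ → ℕ)
    (hmono : ∀ i j, i < j → j < l → kk i < kk j)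
    (hsum : N = ∑ j ∈ Finset.range l, 2 ^ kk j)
    (k : ℕ) (hk : 2 ^ k < N) (hkmax : ∀ k', 2 ^ k' < N → k' ≤ k) :
    let T : Finset (ZMod (N + 1)) :=
      {(0 : ZMod (N + 1))} ∪
        (Finset.range (k + 1)).image (fun i => (((2 : ℤ) ^ i : ℤ) : ZMod (N + 1))) ∪
        (Finset.range (k + 1)).image (fun i => ((-((2 : ℤ) ^ i) : ℤ) : ZMod (N + 1))) ∪
        (Finset.Icc 1 (l - 1)).image
          (fun i => ((∑ j ∈ Finset.range i, 2 ^ kk j : ℕ) : ZMod (N + 1)))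
    ∃ Γ : SimpleGraph (ZMod (N + 1)),
      IsChordal Γ ∧
      (SimpleGraph.fromRel fun i j : ZMod (N + 1) => i - j = 1) ≤ Γ ∧
      ∀ C : Set (ZMod (N + 1)), Γ.IsClique C →
        (∀ C', Γ.IsClique C' → C ⊆ C' → C' = C) →
        ∃ t : ZMod (N + 1), (fun c => t + c) '' C ⊆ ↑T :=
  cycle_triangulation_succ_general N hN l kk hsum k hkmax
end

section
/- Let N and d be positive integers with d dividing N. Suppose the cycle graph C_{N/d} on ℤ_{N/d} admits a chordal cover with frequencies T ⊆ ℤ_{N/d}, i.e. a chordal graph Γ on ℤ_{N/d} containing all edges of C_{N/d} such that every maximal clique C of Γ has a translate k_C + C ⊆ T for some k_C ∈ ℤ_{N/d}. Then the d-th power C_N^d of the cycle graph on ℤ_N admits a chordal cover with frequencies T' := { k·d + r ∈ ℤ_N : k ∈ T, r ∈ {0,…,d−1} } (where k·d is computed from any integer lift of k), i.e. a chordal graph Γ' on ℤ_N containing all edges of C_N^d such that every maximal clique C' of Γ' has a translate t + C' ⊆ T' for some t ∈ ℤ_N. Moreover |T'| ≤ d·|T|. -/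
/-!
Let `π : ℤ_N → ℤ_{N/d}` send `x` to the index `⌊x / d⌋` of its block of `d` consecutive
residues, and let `Γ'` be the blow-up of `Γ` along `π`: every fibre becomes a clique, and two
vertices in different fibres are adjacent iff their images are adjacent in `Γ`. A step of size at
most `d` stays in its block or moves to the next one, so `C_N^d ≤ Γ'`. A chordless cycle of
length at least 4 in `Γ'` cannot use an edge `vw` inside a fibre (the other cycle-neighbour of `v`
would be adjacent to `w`), so `π` is injective on it and maps it onto a cycle of `Γ`, a chord of
which lifts to a chord; hence `Γ'` is chordal. A maximal clique of `Γ'` projects onto a maximal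
clique `S` of `Γ`, and if `t + S ⊆ T` then translating by `t·d` moves the clique into `T'`.

For `N = 0` the type `ZMod 0` is `ℤ` and `val` is `natAbs`, which does not commute with
translations; there one blows up the path on `ℤ` instead of `Γ`, whose cliques lie in pairs
`{a, a + 1}`, and uses two elements of `T` with consecutive absolute values.
-/

open scoped Classical

namespace SimpleGraph

variable {V W : Type*}

namespace Walk

variable {G : SimpleGraph V} {u v w : V}

lemma IsChordless.rotate {c : G.Walk u u} (hc : c.IsChordless) (hv : v ∈ c.support) :
    (c.rotate v hv).IsChordless :=
  isChordless_iff_forall_mem_edges.2 fun _ _ ha hb hab => (c.rotate_edges v hv).perm.mem_iff.2 <|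
    hc.mem_edges ((c.mem_support_rotate_iff v hv).1 ha) ((c.mem_support_rotate_iff v hv).1 hb) hab

lemma IsCycle.eq_snd_or_eq_penultimate {c : G.Walk u u} (hc : c.IsCycle)
    (h : s(u, w) ∈ c.edges) : w = c.snd ∨ w = c.penultimate := by
  cases c with
  | nil => exact absurd hc.not_nil (by simp)
  | cons hadj p =>
    have hp := ((cons_isCycle_iff p hadj).1 hc).1
    rw [edges_cons, List.mem_cons, Sym2.eq_iff] at h
    rcases h with (⟨-, rfl⟩ | ⟨rfl, -⟩) | h
    · exact Or.inl (snd_cons p hadj).symm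
    · exact absurd hadj (G.loopless.irrefl _)
    · rw [penultimate_cons_of_not_nil _ _ (edges_eq_nil.not.1 (List.ne_nil_of_mem h))]
      exact Or.inr (hp.eq_penultimate_of_mem_edges h)

lemma IsCycle.snd_penultimate_notMem_edges {c : G.Walk u u} (hc : c.IsCycle)
    (h4 : 4 ≤ c.length) : s(c.snd, c.penultimate) ∉ c.edges := by
  cases c with
  | nil => simp at h4
  | cons hadj p =>
    rw [length_cons] at h4
    have hp := ((cons_isCycle_iff p hadj).1 hc).1
    have hnil : ¬p.Nil := by rw [not_nil_iff_lt_length]; omega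
    rw [snd_cons, penultimate_cons_of_not_nil _ _ hnil, edges_cons, List.mem_cons, Sym2.eq_iff]
    rintro ((⟨h, -⟩ | ⟨-, h⟩) | h)
    · exact hadj.ne h.symm
    · exact (p.adj_penultimate hnil).ne h
    · have h1 : p.getVert 1 = p.getVert (p.length - 1) := (hp.eq_snd_of_mem_edges h).symm
      have := hp.getVert_injOn (by simp; omega) (by simp) h1
      omega

lemma IsCycle.map_of_injOn {G' : SimpleGraph W} {f : G →g G'} {c : G.Walk u u}
    (hc : c.IsCycle) (hf : Set.InjOn f {x | x ∈ c.support}) : (c.map f).IsCycle := by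
  rw [isCycle_iff_isPath_tail_and_le_length, isPath_def,
    support_tail_of_not_nil _ (by simpa using hc.not_nil), support_map, ← List.map_tail,
    length_map]
  exact ⟨hc.support_nodup.map_on fun x hx y hy =>
    hf (List.mem_of_mem_tail hx) (List.mem_of_mem_tail hy), hc.three_le_length⟩

end Walk

open Walk

lemma IsAcyclic.isChordal {G : SimpleGraph V} (hG : G.IsAcyclic) : IsChordal G :=
  fun _ c hc _ => (hG c hc).elim

variable {π : V → W} {Γ Γ' : SimpleGraph W}

def blowup (π : V → W) (Γ : SimpleGraph W) : SimpleGraph V where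
  Adj x y := x ≠ y ∧ (π x = π y ∨ Γ.Adj (π x) (π y))
  symm := ⟨fun _ _ h => ⟨h.1.symm, h.2.imp Eq.symm Adj.symm⟩⟩
  loopless := ⟨fun _ h => h.1 rfl⟩

lemma blowup_mono (h : Γ ≤ Γ') : blowup π Γ ≤ blowup π Γ' :=
  fun _ _ hxy => ⟨hxy.1, hxy.2.imp_right (@h _ _)⟩

lemma Adj.blowup_of_apply_eq {x v w : V} (h : (blowup π Γ).Adj x v) (hvw : π v = π w)
    (hx : x ≠ w) : (blowup π Γ).Adj x w :=
  ⟨hx, hvw ▸ h.2⟩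

lemma Walk.IsCycle.apply_ne_of_mem_edges_blowup {u v w : V} {c : (blowup π Γ).Walk u u}
    (hc : c.IsCycle) (h4 : 4 ≤ c.length) (hcl : c.IsChordless) (he : s(v, w) ∈ c.edges) :
    π v ≠ π w := by
  intro hvw
  have hv : v ∈ c.support := c.fst_mem_support_of_mem_edges he
  set c' := c.rotate v hv
  have hc' : c'.IsCycle := hc.rotate hv
  have hnil : ¬c'.Nil := hc'.not_nil
  have hadj : (blowup π Γ).Adj c'.snd c'.penultimate := by
    rcases hc'.eq_snd_or_eq_penultimate ((c.rotate_edges v hv).perm.mem_iff.2 he) with rfl | rfl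
    · exact ((c'.adj_penultimate hnil).blowup_of_apply_eq hvw hc'.snd_ne_penultimate.symm).symm
    · exact (c'.adj_snd hnil).symm.blowup_of_apply_eq hvw hc'.snd_ne_penultimate
  exact hc'.snd_penultimate_notMem_edges (by simpa [c'] using h4)
    ((hcl.rotate hv).mem_edges (c'.getVert_mem_support 1) (c'.getVert_mem_support _) hadj)

theorem isChordal_blowup (hΓ : IsChordal Γ) : IsChordal (blowup π Γ) := by
  intro u c hc h4
  by_contra! hcl
  replace hcl : c.IsChordless := isChordless_iff_forall_mem_edges.2 hcl
  have hcross : ∀ e ∈ c.edges, e ∈ (Γ.comap π).edgeSet := by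
    intro e he
    induction e using Sym2.ind with
    | h x y =>
      exact (c.adj_of_mem_edges he).2.resolve_left (hc.apply_ne_of_mem_edges_blowup h4 hcl he)
  have hinj : Set.InjOn π {x | x ∈ c.support} := fun x hx y hy hxy => by
    by_contra hne
    exact hc.apply_ne_of_mem_edges_blowup h4 hcl (hcl.mem_edges hx hy ⟨hne, Or.inl hxy⟩) hxy
  obtain ⟨α, β, hα, hβ, hαβ, hnot⟩ :=
    hΓ _ ((hc.transfer hcross).map_of_injOn (f := Hom.comap π Γ)
      fun x hx y hy => hinj (by simpa using hx) (by simpa using hy))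
      (by simpa using h4)
  simp only [Walk.support_map, support_transfer, List.mem_map] at hα hβ
  obtain ⟨x, hx, rfl⟩ := hα
  obtain ⟨y, hy, rfl⟩ := hβ
  refine hnot ?_
  rw [Walk.edges_map, edges_transfer]
  exact List.mem_map_of_mem (f := Sym2.map π)
    (hcl.mem_edges hx hy ⟨fun h => hαβ.ne (h ▸ rfl), Or.inr hαβ⟩)

lemma IsClique.image_blowup {C : Set V} (hC : (blowup π Γ).IsClique C) :
    Γ.IsClique (π '' C) := by
  rintro _ ⟨x, hx, rfl⟩ _ ⟨y, hy, rfl⟩ hne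
  exact (hC hx hy fun h => hne (h ▸ rfl)).2.resolve_left hne

lemma IsClique.preimage_blowup {S : Set W} (hS : Γ.IsClique S) :
    (blowup π Γ).IsClique (π ⁻¹' S) := fun _ hx _ hy hne =>
  ⟨hne, or_iff_not_imp_left.2 (hS hx hy)⟩

lemma Maximal.image_blowup (hπ : Function.Surjective π) {C : Set V}
    (hC : Maximal (blowup π Γ).IsClique C) : Maximal Γ.IsClique (π '' C) := by
  refine ⟨hC.1.image_blowup, fun S hS hCS s hs => ?_⟩
  obtain ⟨x, rfl⟩ := hπ s
  exact ⟨x, hC.2 hS.preimage_blowup (fun y hy => hCS ⟨y, hy, rfl⟩) hs, rfl⟩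

lemma IsClique.exists_maximal_superset {G : SimpleGraph V} {s : Set V} (hs : G.IsClique s) :
    ∃ t, s ⊆ t ∧ Maximal G.IsClique t :=
  zorn_subset_nonempty {t | G.IsClique t} (fun _ hc hchain _ =>
    ⟨_, (isClique_sUnion hchain.directedOn).2 hc, fun _ => Set.subset_sUnion_of_mem⟩) s hs

end SimpleGraph

open SimpleGraph

lemma intPath_mem_edges_of_lt_of_le {x y k : ℤ}
    (p : (fromRel fun i j : ℤ => i - j = 1).Walk x y) (hx : k < x) (hy : y ≤ k) :
    s(k + 1, k) ∈ p.edges := by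
  induction p with
  | nil => omega
  | @cons a z _ h p ih =>
    rw [Walk.edges_cons, List.mem_cons]
    by_cases hz : k < z
    · exact Or.inr (ih hz hy)
    · rw [fromRel_adj] at h
      left
      obtain rfl : a = k + 1 := by omega
      obtain rfl : z = k := by omega
      rfl

lemma isAcyclic_intPath : (fromRel fun i j : ℤ => i - j = 1).IsAcyclic := by
  refine isAcyclic_iff_forall_adj_isBridge.2 fun v w hvw => isBridge_iff_forall_walk_mem_edges.2 ?_
  rw [fromRel_adj] at hvw
  rcases hvw with ⟨-, h | h⟩
  · obtain rfl : v = w + 1 := by omega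
    exact fun p => intPath_mem_edges_of_lt_of_le p (by omega) le_rfl
  · obtain rfl : w = v + 1 := by omega
    intro p
    simpa [Sym2.eq_swap] using intPath_mem_edges_of_lt_of_le p.reverse (by omega) le_rfl

lemma exists_subset_pair_of_isClique_intPath {S : Set ℤ}
    (hS : (fromRel fun i j : ℤ => i - j = 1).IsClique S) : ∃ a, S ⊆ {a, a + 1} := by
  have hdist : ∀ x ∈ S, ∀ y ∈ S, x = y ∨ x - y = 1 ∨ y - x = 1 := fun x hx y hy => by
    by_cases hxy : x = y
    · exact Or.inl hxy
    · exact Or.inr ((fromRel_adj _ _ _).1 (hS hx hy hxy)).2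
  rcases S.eq_empty_or_nonempty with rfl | ⟨s, hs⟩
  · exact ⟨0, Set.empty_subset _⟩
  by_cases hs1 : s + 1 ∈ S
  · refine ⟨s, fun x hx => ?_⟩
    have hxs := hdist x hx s hs
    have hxs1 := hdist x hx (s + 1) hs1
    simp only [Set.mem_insert_iff, Set.mem_singleton_iff]
    omega
  · refine ⟨s - 1, fun x hx => ?_⟩
    have hxs := hdist x hx s hs
    have hxs1 : x ≠ s + 1 := by rintro rfl; exact hs1 hx
    simp only [Set.mem_insert_iff, Set.mem_singleton_iff]
    omega

lemma Int.add_ediv_eq_or {n m d : ℤ} (hd : 0 < d) (hm : 0 ≤ m) (hmd : m ≤ d) :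
    (n + m) / d = n / d ∨ (n + m) / d = n / d + 1 := by
  have h1 := Int.ediv_le_ediv hd (show n ≤ n + m by omega)
  have h2 := Int.ediv_le_ediv hd (show n + m ≤ n + 1 * d by omega)
  rw [Int.add_mul_ediv_right _ _ hd.ne'] at h2
  omega

namespace ZMod

variable {M N d : ℕ}

-- `x.cast : ℤ` is the representative of `x` in `[0, N)`, or `x` itself when `N = 0`.
def blockIndex (M d : ℕ) {N : ℕ} (x : ZMod N) : ZMod M := ((x.cast : ℤ) / d : ℤ)

def blockFinset (N d : ℕ) {M : ℕ} (T : Finset (ZMod M)) : Finset (ZMod N) :=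
  (T ×ˢ Finset.range d).image fun p => ((p.1.val * d + p.2 : ℕ) : ZMod N)

lemma blockIndex_intCast (hN : N = M * d) (n : ℤ) :
    blockIndex M d (n : ZMod N) = ((n / d : ℤ) : ZMod M) := by
  rcases eq_or_ne d 0 with rfl | hd
  · simp [blockIndex]
  rw [blockIndex, coe_intCast, intCast_eq_intCast_iff_dvd_sub, hN]
  have hdiv : n / d = (n % (M * d : ℕ) + d * (M * (n / (M * d : ℕ)))) / d := by
    congr 1
    push_cast
    linarith [Int.emod_add_mul_ediv n (M * d)]
  rw [hdiv, Int.add_mul_ediv_left _ _ (by exact_mod_cast hd)]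
  exact Dvd.intro (n / (M * d : ℕ)) (by ring)

lemma blockIndex_surjective (hN : N = M * d) (hd : d ≠ 0) :
    Function.Surjective (blockIndex M d : ZMod N → ZMod M) := fun k =>
  ⟨((k.cast * d : ℤ) : ZMod N), by
    rw [blockIndex_intCast hN, Int.mul_ediv_cancel _ (by exact_mod_cast hd), intCast_zmod_cast]⟩

lemma blockIndex_add_natCast (hN : N = M * d) (hd : 0 < d) (x : ZMod N) {m : ℕ} (hmd : m ≤ d) :
    blockIndex M d (x + (m : ZMod N)) = blockIndex M d x ∨
      blockIndex M d (x + (m : ZMod N)) = blockIndex M d x + 1 := by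
  rw [← intCast_zmod_cast x, ← Int.cast_natCast, ← Int.cast_add, blockIndex_intCast hN,
    blockIndex_intCast hN]
  rcases Int.add_ediv_eq_or (n := x.cast) (d := d) (by exact_mod_cast hd) (Int.natCast_nonneg m)
    (by exact_mod_cast hmd) with h | h
  · exact Or.inl (by rw [h])
  · exact Or.inr (by rw [h]; push_cast; ring)

lemma cyclePower_le_blowup (hN : N = M * d) (hd : 0 < d) :
    fromRel (fun i j : ZMod N => ∃ m : ℕ, 1 ≤ m ∧ m ≤ d ∧ i - j = m) ≤
      blowup (blockIndex M d) (fromRel fun i j : ZMod M => i - j = 1) := by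
  have step : ∀ i j : ZMod N, (∃ m : ℕ, 1 ≤ m ∧ m ≤ d ∧ i - j = m) →
      blockIndex M d i = blockIndex M d j ∨
        (fromRel fun i j : ZMod M => i - j = 1).Adj (blockIndex M d i) (blockIndex M d j) := by
    rintro i j ⟨m, -, hmd, hij⟩
    rw [sub_eq_iff_eq_add'] at hij
    subst hij
    rcases blockIndex_add_natCast hN hd j hmd with h | h
    · exact Or.inl h
    · exact or_iff_not_imp_left.2 fun hne =>
        (fromRel_adj _ _ _).2 ⟨hne, Or.inl (by rw [h, add_sub_cancel_left])⟩
  rintro i j ⟨hne, h | h⟩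
  · exact ⟨hne, step i j h⟩
  · exact ⟨hne, (step j i h).imp Eq.symm Adj.symm⟩

lemma card_blockFinset_le (T : Finset (ZMod M)) : (blockFinset N d T).card ≤ d * T.card :=
  Finset.card_image_le.trans <| by rw [Finset.card_product, Finset.card_range, mul_comm]

lemma natCast_mem_blockFinset {T : Finset (ZMod M)} {k : ZMod M} (hk : k ∈ T) {r : ℕ}
    (hr : r < d) : ((k.val * d + r : ℕ) : ZMod N) ∈ blockFinset N d T :=
  Finset.mem_image.2 ⟨(k, r), Finset.mem_product.2 ⟨hk, Finset.mem_range.2 hr⟩, rfl⟩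

lemma intCast_mul_add_mem_blockFinset [NeZero M] (hN : N = M * d) (hd : 0 < d)
    {T : Finset (ZMod M)} {t : ZMod M} {x : ZMod N} (hx : t + blockIndex M d x ∈ T) :
    ((t.cast * d : ℤ) : ZMod N) + x ∈ blockFinset N d T := by
  set n : ℤ := x.cast
  have hd' : (0 : ℤ) < d := by exact_mod_cast hd
  have hr0 : 0 ≤ n % d := Int.emod_nonneg _ hd'.ne'
  have hrd : (n % d).toNat < d := by have := Int.emod_lt_of_pos n hd'; omega
  convert natCast_mem_blockFinset hx hrd using 1
  have hk : t + blockIndex M d x = ((t.cast + n / d : ℤ) : ZMod M) := by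
    rw [blockIndex, Int.cast_add, intCast_zmod_cast]
  rw [hk]
  conv_rhs => rw [← Int.cast_natCast]
  rw [← intCast_zmod_cast x, ← Int.cast_add, ZMod.intCast_eq_intCast_iff]
  rw [Nat.cast_add, Nat.cast_mul, val_intCast, Int.toNat_of_nonneg hr0]
  subst hN
  calc (t.cast : ℤ) * d + n = ((t.cast : ℤ) + n / d) * d + n % d := by
        rw [add_mul, add_assoc, Int.ediv_mul_add_emod]
    _ ≡ _ [ZMOD (M * d : ℕ)] := by
        push_cast
        exact (Int.mod_modEq _ _).symm.mul_right'.add_right _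

theorem exists_mem_val_eq_add_one {T : Finset (ZMod 0)} {Γ : SimpleGraph (ZMod 0)}
    (hcover : (fromRel fun i j : ZMod 0 => i - j = 1) ≤ Γ)
    (hfreq : ∀ C, Maximal Γ.IsClique C → ∃ t, (t + ·) '' C ⊆ T) :
    ∃ k₀ ∈ T, ∃ k₁ ∈ T, k₁.val = k₀.val + 1 := by
  have h01 : Γ.IsClique {0, 1} :=
    isClique_pair.2 fun h => hcover ((fromRel_adj _ _ _).2 ⟨h, Or.inr (sub_zero 1)⟩)
  obtain ⟨S, hS01, hS⟩ := h01.exists_maximal_superset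
  obtain ⟨t, ht⟩ := hfreq S hS
  have h0 : t + 0 ∈ T := ht ⟨0, hS01 (by simp), rfl⟩
  have h1 : t + 1 ∈ T := ht ⟨1, hS01 (by simp), rfl⟩
  change ℤ at t
  rcases le_or_gt 0 t with ht0 | ht0
  · exact ⟨_, h0, _, h1, show (t + 1).natAbs = (t + 0).natAbs + 1 by omega⟩
  · exact ⟨_, h1, _, h0, show (t + 0).natAbs = (t + 1).natAbs + 1 by omega⟩

theorem exists_add_image_subset_blockFinset_zero (hd : 0 < d) {T : Finset (ZMod 0)}
    {k₀ k₁ : ZMod 0} (hk₀ : k₀ ∈ T) (hk₁ : k₁ ∈ T) (hk : k₁.val = k₀.val + 1)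
    {C : Set (ZMod 0)}
    (hC : (blowup (blockIndex 0 d) (fromRel fun i j : ZMod 0 => i - j = 1)).IsClique C) :
    ∃ t, (t + ·) '' C ⊆ blockFinset 0 d T := by
  obtain ⟨a, ha⟩ :=
    exists_subset_pair_of_isClique_intPath (S := blockIndex 0 d '' C) hC.image_blowup
  refine ⟨(((k₀.val : ℤ) - a) * d : ℤ), ?_⟩
  rintro _ ⟨x, hx, rfl⟩
  change ℤ at x
  have hxa : x / d = a ∨ x / d = a + 1 := ha ⟨x, hx, rfl⟩
  have hd' : (0 : ℤ) < d := by exact_mod_cast hd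
  have hr0 : 0 ≤ x % d := Int.emod_nonneg _ hd'.ne'
  have hrd : (x % d).toNat < d := by have := Int.emod_lt_of_pos x hd'; omega
  have hdiv := Int.ediv_mul_add_emod x d
  refine Finset.mem_coe.2 ?_
  rcases hxa with hxa | hxa
  · convert natCast_mem_blockFinset (N := 0) hk₀ hrd using 1
    change ((k₀.val : ℤ) - a) * d + x = ((k₀.val * d + (x % d).toNat : ℕ) : ℤ)
    push_cast [Int.toNat_of_nonneg hr0]
    linear_combination hdiv.symm + d * hxa
  · convert natCast_mem_blockFinset (N := 0) hk₁ hrd using 1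
    change ((k₀.val : ℤ) - a) * d + x = ((k₁.val * d + (x % d).toNat : ℕ) : ℤ)
    push_cast [hk, Int.toNat_of_nonneg hr0]
    linear_combination hdiv.symm + d * hxa

theorem exists_chordal_cover_blockFinset (hd : 0 < d) (hN : N = M * d)
    {T : Finset (ZMod M)} {Γ : SimpleGraph (ZMod M)} (hchordal : IsChordal Γ)
    (hcover : (fromRel fun i j : ZMod M => i - j = 1) ≤ Γ)
    (hfreq : ∀ C, Maximal Γ.IsClique C → ∃ t, (t + ·) '' C ⊆ T) :
    ∃ Γ' : SimpleGraph (ZMod N), IsChordal Γ' ∧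
      fromRel (fun i j : ZMod N => ∃ m : ℕ, 1 ≤ m ∧ m ≤ d ∧ i - j = m) ≤ Γ' ∧
      ∀ C, Maximal Γ'.IsClique C → ∃ t, (t + ·) '' C ⊆ blockFinset N d T := by
  rcases M.eq_zero_or_pos with rfl | hM
  · obtain rfl : N = 0 := by simpa using hN
    obtain ⟨k₀, hk₀, k₁, hk₁, hk⟩ := exists_mem_val_eq_add_one hcover hfreq
    exact ⟨_, isChordal_blowup isAcyclic_intPath.isChordal,
      cyclePower_le_blowup hN hd,
      fun C hC => exists_add_image_subset_blockFinset_zero hd hk₀ hk₁ hk hC.1⟩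
  · have : NeZero M := ⟨hM.ne'⟩
    refine ⟨_, isChordal_blowup hchordal, (cyclePower_le_blowup hN hd).trans (blowup_mono hcover),
      fun C hC => ?_⟩
    obtain ⟨t, ht⟩ := hfreq _ (hC.image_blowup (blockIndex_surjective hN hd.ne'))
    exact ⟨_, Set.image_subset_iff.2 fun x hx =>
      intCast_mul_add_mem_blockFinset hN hd (ht ⟨_, ⟨x, hx, rfl⟩, rfl⟩)⟩

end ZMod

/-- **Proposition 9: triangulating `C_N^d` from a triangulation of `C_{N/d}`.** If
`d ∣ N` and the cycle graph `C_{N/d}` has a chordal cover with frequencies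
`T ⊆ ℤ_{N/d}` (every maximal clique has a translate inside `T`), then the `d`-th power
`C_N^d` of the `N`-cycle has a chordal cover with frequencies
`T' = {k·d + r : k ∈ T, 0 ≤ r < d} ⊆ ℤ_N`, and `|T'| ≤ d·|T|`. -/
theorem cycle_power_triangulation
    (N d : ℕ) (hd : 0 < d) (hdvd : d ∣ N)
    (T : Finset (ZMod (N / d)))
    (Γ : SimpleGraph (ZMod (N / d)))
    (hchordal : IsChordal Γ)
    (hcover : (SimpleGraph.fromRel fun i j : ZMod (N / d) => i - j = 1) ≤ Γ)
    (hfreq : ∀ C : Set (ZMod (N / d)), Γ.IsClique C →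
      (∀ C', Γ.IsClique C' → C ⊆ C' → C' = C) →
      ∃ t : ZMod (N / d), (fun c => t + c) '' C ⊆ ↑T) :
    let T' : Finset (ZMod N) :=
      (T ×ˢ Finset.range d).image (fun p => ((p.1.val * d + p.2 : ℕ) : ZMod N))
    T'.card ≤ d * T.card ∧
    ∃ Γ' : SimpleGraph (ZMod N),
      IsChordal Γ' ∧
      (SimpleGraph.fromRel (fun i j : ZMod N =>
        ∃ m : ℕ, 1 ≤ m ∧ m ≤ d ∧ i - j = (m : ZMod N)) ≤ Γ') ∧
      ∀ C : Set (ZMod N), Γ'.IsClique C →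
        (∀ C', Γ'.IsClique C' → C ⊆ C' → C' = C) →
        ∃ t : ZMod N, (fun c => t + c) '' C ⊆ ↑T' := by
  obtain ⟨Γ', hΓ'chordal, hΓ'cover, hΓ'freq⟩ :=
    ZMod.exists_chordal_cover_blockFinset hd (Nat.div_mul_cancel hdvd).symm hchordal hcover
      fun C hC => hfreq C hC.1 fun _ hC' hCC' => (hC.2 hC' hCC').antisymm hCC'
  exact ⟨ZMod.card_blockFinset_le T, Γ', hΓ'chordal, hΓ'cover,
    fun C hC hmax => hΓ'freq C ⟨hC, fun _ hC' hCC' => (hmax _ hC' hCC').le⟩⟩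
end
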